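/- arXiv:1508.03901 — 4 statements merged into one kernel-verified Lean document; each statement's English description precedes it below -/
import Mathlib

section
/- If a process P of finite linear CCS reduces in one step to P', then there exists a name a such that the set of names occurring in P is the disjoint union of the names of P' with {a}, and P offers both an input and an output on a (i.e., sync(a,P) holds). -/
/-- Finite CCS processes: 0, input prefix a.P, output prefix ā.P, parallel. -/
inductive Proc : Type where
  | nil : Proc
  | inp : ℕ → Proc → Proc
  | out : ℕ → Proc → Proc
  | par : Proc → Proc → Proc

open Proc

/-- Structural equivalence: smallest congruence with unit, commutativity, associativity. -/
inductive StrEq : Proc → Proc → Prop where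
  | refl (P) : StrEq P P
  | symm {P Q} : StrEq P Q → StrEq Q P
  | trans {P Q R} : StrEq P Q → StrEq Q R → StrEq P R
  | nilPar (P) : StrEq (par P nil) P
  | comm (P Q) : StrEq (par P Q) (par Q P)
  | assoc (P Q R) : StrEq (par P (par Q R)) (par (par P Q) R)
  | congPar {P P' Q Q'} : StrEq P P' → StrEq Q Q' → StrEq (par P Q) (par P' Q')
  | congInp (a) {P P'} : StrEq P P' → StrEq (inp a P) (inp a P')
  | congOut (a) {P P'} : StrEq P P' → StrEq (out a P) (out a P')

/-- Reduction: a.P ‖ ā.Q → P ‖ Q, closed under parallel contexts and ≡. -/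
inductive Red : Proc → Proc → Prop where
  | comm (a P Q) : Red (par (inp a P) (out a Q)) (par P Q)
  | parL {P P'} (Q) : Red P P' → Red (par P Q) (par P' Q)
  | parR (P) {Q Q'} : Red Q Q' → Red (par P Q) (par P Q')
  | str {P P' Q Q'} : StrEq P P' → Red P' Q' → StrEq Q' Q → Red P Q

/-- Reflexive-transitive closure of reduction. -/
def Reds : Proc → Proc → Prop := Relation.ReflTransGen Red

/-- The set of names occurring in a process (ignoring polarity). -/
def names : Proc → Finset ℕ
  | nil => ∅
  | inp a P => insert a (names P)
  | out a P => insert a (names P)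
  | par P Q => names P ∪ names Q

/-- Number of input occurrences of a name. -/
def inCount (a : ℕ) : Proc → ℕ
  | nil => 0
  | inp b P => (if b = a then 1 else 0) + inCount a P
  | out _ P => inCount a P
  | par P Q => inCount a P + inCount a Q

/-- Number of output occurrences of a name. -/
def outCount (a : ℕ) : Proc → ℕ
  | nil => 0
  | inp _ P => outCount a P
  | out b P => (if b = a then 1 else 0) + outCount a P
  | par P Q => outCount a P + outCount a Q

/-- Linearity: each name occurs at most once as input and at most once as output. -/
def Linear (P : Proc) : Prop := ∀ a, inCount a P ≤ 1 ∧ outCount a P ≤ 1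

/-- in(a,P): P ≡ P' ‖ a.P''. -/
def InPred (a : ℕ) (P : Proc) : Prop := ∃ P' P'', StrEq P (par P' (inp a P''))

/-- out(a,P): P ≡ P' ‖ ā.P''. -/
def OutPred (a : ℕ) (P : Proc) : Prop := ∃ P' P'', StrEq P (par P' (out a P''))

/-- sync(a,P): both in(a,P) and out(a,P). -/
def SyncPred (a : ℕ) (P : Proc) : Prop := InPred a P ∧ OutPred a P

/-- wait(a,P): in(a,P) exclusive-or out(a,P). -/
def WaitPred (a : ℕ) (P : Proc) : Prop := Xor' (InPred a P) (OutPred a P)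

/-- Process contexts C ::= [-] | P‖C | C‖P | α.C. -/
inductive Ctx : Type where
  | hole : Ctx
  | parL : Proc → Ctx → Ctx
  | parR : Ctx → Proc → Ctx
  | inp : ℕ → Ctx → Ctx
  | out : ℕ → Ctx → Ctx

/-- Filling a process context. -/
def Ctx.fill : Ctx → Proc → Proc
  | .hole, Q => Q
  | .parL P C, Q => Proc.par P (C.fill Q)
  | .parR C P, Q => Proc.par (C.fill Q) P
  | .inp a C, Q => Proc.inp a (C.fill Q)
  | .out a C, Q => Proc.out a (C.fill Q)

/-- Evaluation contexts E ::= [-] | P‖E | E‖P. -/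
inductive ECtx : Type where
  | hole : ECtx
  | parL : Proc → ECtx → ECtx
  | parR : ECtx → Proc → ECtx

/-- Filling an evaluation context. -/
def ECtx.fill : ECtx → Proc → Proc
  | .hole, Q => Q
  | .parL P E, Q => Proc.par P (E.fill Q)
  | .parR E P, Q => Proc.par (E.fill Q) P

/-- cin(a,P): an input prefix on a occurs anywhere in P. -/
def CInPred (a : ℕ) (P : Proc) : Prop := ∃ (C : Ctx) (Q : Proc), StrEq P (C.fill Q) ∧ InPred a Q

/-- cout(a,P): an output prefix on a occurs anywhere in P. -/
def COutPred (a : ℕ) (P : Proc) : Prop := ∃ (C : Ctx) (Q : Proc), StrEq P (C.fill Q) ∧ OutPred a Q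

/-- P is complete: ∀a. cin(a,P) ⟺ cout(a,P). -/
def Complete (P : Proc) : Prop := ∀ a, CInPred a P ↔ COutPred a P

/-- P is top-complete. -/
def TopComplete (P : Proc) : Prop :=
  ∀ a, (InPred a P → COutPred a P) ∧ (OutPred a P → CInPred a P)

/-- dl(P): P has no reduction and P ≢ 0. -/
def Deadlock (P : Proc) : Prop := (¬ ∃ Q, Red P Q) ∧ ¬ StrEq P nil

/-- Lock-freedom. -/
def LockFree (P : Proc) : Prop :=
  ∀ Q a, Reds P Q → WaitPred a Q → ∃ R, Reds Q R ∧ SyncPred a R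

lemma streq_names {P Q : Proc} (h : StrEq P Q) : names P = names Q := by
  induction h with
  | refl => rfl
  | symm _ ih => exact ih.symm
  | trans _ _ ih1 ih2 => exact ih1.trans ih2
  | nilPar P => simp [names]
  | comm P Q => simp [names, Finset.union_comm]
  | assoc P Q R => simp [names, Finset.union_assoc]
  | congPar _ _ ih1 ih2 => simp [names, ih1, ih2]
  | congInp a _ ih => simp [names, ih]
  | congOut a _ ih => simp [names, ih]

lemma streq_inCount {P Q : Proc} (h : StrEq P Q) (a : ℕ) :
    inCount a P = inCount a Q := by
  induction h with
  | refl => rfl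
  | symm _ ih => exact ih.symm
  | trans _ _ ih1 ih2 => exact ih1.trans ih2
  | nilPar P => simp [inCount]
  | comm P Q => simp [inCount]; omega
  | assoc P Q R => simp [inCount]; omega
  | congPar _ _ ih1 ih2 => simp [inCount, ih1, ih2]
  | congInp b _ ih => simp [inCount, ih]
  | congOut b _ ih => simp [inCount, ih]

lemma streq_outCount {P Q : Proc} (h : StrEq P Q) (a : ℕ) :
    outCount a P = outCount a Q := by
  induction h with
  | refl => rfl
  | symm _ ih => exact ih.symm
  | trans _ _ ih1 ih2 => exact ih1.trans ih2
  | nilPar P => simp [outCount]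
  | comm P Q => simp [outCount]; omega
  | assoc P Q R => simp [outCount]; omega
  | congPar _ _ ih1 ih2 => simp [outCount, ih1, ih2]
  | congInp b _ ih => simp [outCount, ih]
  | congOut b _ ih => simp [outCount, ih]

lemma mem_names_iff (a : ℕ) (P : Proc) :
    a ∈ names P ↔ 0 < inCount a P ∨ 0 < outCount a P := by
  induction P with
  | nil => simp [names, inCount, outCount]
  | inp b P ih =>
    simp [names, inCount, outCount, ih]
    rcases eq_or_ne b a with rfl | h
    · simp
    · simp [h, Ne.symm h]
  | out b P ih =>
    simp [names, inCount, outCount, ih]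
    rcases eq_or_ne b a with rfl | h
    · simp
    · simp [h, Ne.symm h]
  | par P Q ih1 ih2 =>
    simp [names, inCount, outCount, ih1, ih2]
    omega

lemma inPred_inCount {a : ℕ} {P : Proc} (h : InPred a P) : 1 ≤ inCount a P := by
  obtain ⟨P', P'', h⟩ := h
  rw [streq_inCount h a]
  simp [inCount]
  omega

lemma outPred_outCount {a : ℕ} {P : Proc} (h : OutPred a P) : 1 ≤ outCount a P := by
  obtain ⟨P', P'', h⟩ := h
  rw [streq_outCount h a]
  simp [outCount]
  omega

lemma inPred_parL {a : ℕ} {P : Proc} (Q : Proc) (h : InPred a P) :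
    InPred a (par P Q) := by
  obtain ⟨P', P'', h⟩ := h
  exact ⟨par P' Q, P'',
    .trans (.congPar h (.refl Q))
      (.trans (.symm (.assoc P' (inp a P'') Q))
        (.trans (.congPar (.refl P') (.comm (inp a P'') Q))
          (.assoc P' Q (inp a P''))))⟩

lemma outPred_parL {a : ℕ} {P : Proc} (Q : Proc) (h : OutPred a P) :
    OutPred a (par P Q) := by
  obtain ⟨P', P'', h⟩ := h
  exact ⟨par P' Q, P'',
    .trans (.congPar h (.refl Q))
      (.trans (.symm (.assoc P' (out a P'') Q))
        (.trans (.congPar (.refl P') (.comm (out a P'') Q))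
          (.assoc P' Q (out a P''))))⟩

lemma inPred_parR {a : ℕ} (P : Proc) {Q : Proc} (h : InPred a Q) :
    InPred a (par P Q) := by
  obtain ⟨Q', Q'', h⟩ := h
  exact ⟨par P Q', Q'', .trans (.congPar (.refl P) h) (.assoc P Q' (inp a Q''))⟩

lemma outPred_parR {a : ℕ} (P : Proc) {Q : Proc} (h : OutPred a Q) :
    OutPred a (par P Q) := by
  obtain ⟨Q', Q'', h⟩ := h
  exact ⟨par P Q', Q'', .trans (.congPar (.refl P) h) (.assoc P Q' (out a Q''))⟩

lemma inPred_streq {a : ℕ} {P Q : Proc} (h : StrEq P Q) (hi : InPred a Q) :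
    InPred a P := by
  obtain ⟨Q', Q'', hq⟩ := hi
  exact ⟨Q', Q'', h.trans hq⟩

lemma outPred_streq {a : ℕ} {P Q : Proc} (h : StrEq P Q) (hi : OutPred a Q) :
    OutPred a P := by
  obtain ⟨Q', Q'', hq⟩ := hi
  exact ⟨Q', Q'', h.trans hq⟩

theorem red_names_sync {P P' : Proc} (hlin : Linear P) (h : Red P P') :
    ∃ a : ℕ, a ∉ names P' ∧ names P = insert a (names P') ∧ SyncPred a P := by
  induction h with
  | comm a P Q =>
    refine ⟨a, ?_, ?_, ?_, ?_⟩
    · obtain ⟨hin, hout⟩ := hlin a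
      simp [inCount, outCount] at hin hout
      rw [mem_names_iff]
      simp only [names, inCount, outCount]
      omega
    · simp only [names]
      rw [Finset.insert_union, Finset.union_insert, Finset.insert_idem]
    · exact ⟨out a Q, P, .comm _ _⟩
    · exact ⟨inp a P, Q, .refl _⟩
  | parL Q hred ih =>
    rename_i P P'
    have hlinP : Linear P := fun a => by
      have := hlin a; simp only [inCount, outCount] at this; omega
    obtain ⟨a, hnot, hnames, hsync⟩ := ih hlinP
    have haP : a ∈ names P := by rw [hnames]; exact Finset.mem_insert_self _ _
    have haQ : a ∉ names Q := by
      rw [mem_names_iff] at haP ⊢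
      have h1 := inPred_inCount hsync.1
      have h2 := outPred_outCount hsync.2
      have := hlin a
      simp only [Linear, inCount, outCount] at this
      omega
    refine ⟨a, ?_, ?_, inPred_parL Q hsync.1, outPred_parL Q hsync.2⟩
    · simp [names, hnot, haQ]
    · simp only [names, hnames, Finset.insert_union]
  | parR P hred ih =>
    rename_i Q Q'
    have hlinQ : Linear Q := fun a => by
      have := hlin a; simp only [inCount, outCount] at this; omega
    obtain ⟨a, hnot, hnames, hsync⟩ := ih hlinQ
    have haQ : a ∈ names Q := by rw [hnames]; exact Finset.mem_insert_self _ _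
    have haP : a ∉ names P := by
      rw [mem_names_iff] at haQ ⊢
      have h1 := inPred_inCount hsync.1
      have h2 := outPred_outCount hsync.2
      have := hlin a
      simp only [Linear, inCount, outCount] at this
      omega
    refine ⟨a, ?_, ?_, inPred_parR P hsync.1, outPred_parR P hsync.2⟩
    · simp [names, hnot, haP]
    · simp only [names, hnames, Finset.union_insert]
  | str h1 hred h2 ih =>
    rename_i P P₁ Q Q₁
    have hlin1 : Linear P₁ := fun a => by
      have := hlin a
      rw [streq_inCount h1 a, streq_outCount h1 a] at this
      exact this
    obtain ⟨a, hnot, hnames, hsync⟩ := ih hlin1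
    refine ⟨a, ?_, ?_, inPred_streq h1 hsync.1, outPred_streq h1 hsync.2⟩
    · rw [← streq_names h2]; exact hnot
    · rw [streq_names h1, ← streq_names h2]; exact hnames
end

section
/- If P is complete, P →* Q, Q is a normal form (Q has no reduction) and Q is not structurally equivalent to 0, then there is a name a such that wait(a,Q) holds, i.e., Q offers a top-level input on a but no top-level output on a, or vice versa; moreover Q is top-complete. -/
open Proc

/-! ### Auxiliary machinery -/

def topIn (a : ℕ) : Proc → ℕ
  | nil => 0
  | inp b _ => if b = a then 1 else 0
  | out _ _ => 0
  | par P Q => topIn a P + topIn a Q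

def topOut (a : ℕ) : Proc → ℕ
  | nil => 0
  | inp _ _ => 0
  | out b _ => if b = a then 1 else 0
  | par P Q => topOut a P + topOut a Q

lemma streq_counts {P Q : Proc} (h : StrEq P Q) (a : ℕ) :
    inCount a P = inCount a Q ∧ outCount a P = outCount a Q ∧
    topIn a P = topIn a Q ∧ topOut a P = topOut a Q := by
  induction h with
  | refl => exact ⟨rfl, rfl, rfl, rfl⟩
  | symm _ ih => obtain ⟨h1, h2, h3, h4⟩ := ih; exact ⟨h1.symm, h2.symm, h3.symm, h4.symm⟩
  | trans _ _ ih1 ih2 =>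
      obtain ⟨a1, a2, a3, a4⟩ := ih1; obtain ⟨b1, b2, b3, b4⟩ := ih2
      exact ⟨a1.trans b1, a2.trans b2, a3.trans b3, a4.trans b4⟩
  | nilPar P => simp [inCount, outCount, topIn, topOut]
  | comm P Q => simp [inCount, outCount, topIn, topOut]; omega
  | assoc P Q R => simp [inCount, outCount, topIn, topOut]; omega
  | congPar _ _ ih1 ih2 =>
      obtain ⟨a1, a2, a3, a4⟩ := ih1; obtain ⟨b1, b2, b3, b4⟩ := ih2
      simp [inCount, outCount, topIn, topOut]; omega
  | congInp b _ ih =>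
      obtain ⟨a1, a2, a3, a4⟩ := ih
      simp [inCount, outCount, topIn, topOut]; omega
  | congOut b _ ih =>
      obtain ⟨a1, a2, a3, a4⟩ := ih
      simp [inCount, outCount, topIn, topOut]; omega

lemma parNil (P : Proc) : StrEq (par nil P) P :=
  (StrEq.comm nil P).trans (StrEq.nilPar P)

lemma inPred_self (a : ℕ) (P : Proc) : InPred a (inp a P) :=
  ⟨nil, P, (parNil _).symm⟩

lemma outPred_self (a : ℕ) (P : Proc) : OutPred a (out a P) :=
  ⟨nil, P, (parNil _).symm⟩

lemma topIn_pos_iff {a : ℕ} {P : Proc} : 1 ≤ topIn a P ↔ InPred a P := by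
  constructor
  · intro h
    induction P with
    | nil => simp [topIn] at h
    | inp b P ih =>
        simp [topIn] at h
        split at h
        · rename_i hb; subst hb; exact inPred_self _ P
        · omega
    | out b P ih => simp [topIn] at h
    | par P Q ihP ihQ =>
        simp [topIn] at h
        rcases Nat.lt_or_ge (topIn a P) 1 with h1 | h1
        · exact inPred_parR P (ihQ (by omega))
        · exact inPred_parL Q (ihP h1)
  · rintro ⟨P1, P2, h⟩
    have := (streq_counts h a).2.2.1
    simp [topIn] at this
    omega

lemma topOut_pos_iff {a : ℕ} {P : Proc} : 1 ≤ topOut a P ↔ OutPred a P := by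
  constructor
  · intro h
    induction P with
    | nil => simp [topOut] at h
    | inp b P ih => simp [topOut] at h
    | out b P ih =>
        simp [topOut] at h
        split at h
        · rename_i hb; subst hb; exact outPred_self _ P
        · omega
    | par P Q ihP ihQ =>
        simp [topOut] at h
        rcases Nat.lt_or_ge (topOut a P) 1 with h1 | h1
        · exact outPred_parR P (ihQ (by omega))
        · exact outPred_parL Q (ihP h1)
  · rintro ⟨P1, P2, h⟩
    have := (streq_counts h a).2.2.2
    simp [topOut] at this
    omega

lemma shuffle (A B C D : Proc) :
    StrEq (par (par A B) (par C D)) (par (par A C) (par B D)) := by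
  refine StrEq.trans (StrEq.symm (StrEq.assoc A B (par C D))) ?_
  refine StrEq.trans (StrEq.congPar (StrEq.refl A) (StrEq.assoc B C D)) ?_
  refine StrEq.trans (StrEq.congPar (StrEq.refl A)
    (StrEq.congPar (StrEq.comm B C) (StrEq.refl D))) ?_
  refine StrEq.trans (StrEq.congPar (StrEq.refl A) (StrEq.symm (StrEq.assoc C B D))) ?_
  exact StrEq.assoc A C (par B D)

lemma red_of_in_out {a : ℕ} {P Q : Proc} (hi : InPred a P) (ho : OutPred a Q) :
    ∃ R, Red (par P Q) R := by
  obtain ⟨A, B, hA⟩ := hi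
  obtain ⟨C, D, hC⟩ := ho
  refine ⟨par (par A C) (par B D), Red.str ?_ (Red.parR (par A C) (Red.comm a B D)) (StrEq.refl _)⟩
  exact (StrEq.congPar hA hC).trans (shuffle A (inp a B) C (out a D))

lemma sync_red {a : ℕ} {P : Proc} (hi : 1 ≤ topIn a P) (ho : 1 ≤ topOut a P) :
    ∃ R, Red P R := by
  induction P with
  | nil => simp [topIn] at hi
  | inp b P ih => simp [topOut] at ho
  | out b P ih => simp [topIn] at hi
  | par P Q ihP ihQ =>
      simp [topIn] at hi
      simp [topOut] at ho
      by_cases hiP : 1 ≤ topIn a P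
      · by_cases hoP : 1 ≤ topOut a P
        · obtain ⟨R, hR⟩ := ihP hiP hoP
          exact ⟨par R Q, Red.parL Q hR⟩
        · have hoQ : 1 ≤ topOut a Q := by omega
          exact red_of_in_out (topIn_pos_iff.mp hiP) (topOut_pos_iff.mp hoQ)
      · have hiQ : 1 ≤ topIn a Q := by omega
        by_cases hoQ : 1 ≤ topOut a Q
        · obtain ⟨R, hR⟩ := ihQ hiQ hoQ
          exact ⟨par P R, Red.parR P hR⟩
        · have hoP : 1 ≤ topOut a P := by omega
          obtain ⟨R, hR⟩ := red_of_in_out (topIn_pos_iff.mp hiQ) (topOut_pos_iff.mp hoP)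
          exact ⟨R, Red.str (StrEq.comm P Q) hR (StrEq.refl R)⟩

lemma topIn_le_inCount (a : ℕ) (P : Proc) : topIn a P ≤ inCount a P := by
  induction P with
  | nil => simp [topIn, inCount]
  | inp b P ih => simp [topIn, inCount] <;> omega
  | out b P ih => simp [topIn, inCount] <;> omega
  | par P Q ihP ihQ => simp [topIn, inCount] <;> omega

lemma topOut_le_outCount (a : ℕ) (P : Proc) : topOut a P ≤ outCount a P := by
  induction P with
  | nil => simp [topOut, outCount]
  | inp b P ih => simp [topOut, outCount] <;> omega
  | out b P ih => simp [topOut, outCount] <;> omega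
  | par P Q ihP ihQ => simp [topOut, outCount] <;> omega

lemma inCount_fill_le (a : ℕ) (C : Ctx) (Q : Proc) : inCount a Q ≤ inCount a (C.fill Q) := by
  induction C with
  | hole => simp [Ctx.fill]
  | parL P C ih => simp [Ctx.fill, inCount]; omega
  | parR C P ih => simp [Ctx.fill, inCount]; omega
  | inp b C ih => simp [Ctx.fill, inCount]; omega
  | out b C ih => simp [Ctx.fill, inCount]; omega

lemma outCount_fill_le (a : ℕ) (C : Ctx) (Q : Proc) : outCount a Q ≤ outCount a (C.fill Q) := by
  induction C with
  | hole => simp [Ctx.fill]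
  | parL P C ih => simp [Ctx.fill, outCount]; omega
  | parR C P ih => simp [Ctx.fill, outCount]; omega
  | inp b C ih => simp [Ctx.fill, outCount]; omega
  | out b C ih => simp [Ctx.fill, outCount]; omega

lemma exists_ctx_inp {a : ℕ} {P : Proc} (h : 1 ≤ inCount a P) :
    ∃ C P', P = Ctx.fill C (inp a P') := by
  induction P with
  | nil => simp [inCount] at h
  | inp b P ih =>
      simp [inCount] at h
      by_cases hb : b = a
      · subst hb; exact ⟨Ctx.hole, P, rfl⟩
      · simp [hb] at h
        obtain ⟨C, P', hP⟩ := ih h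
        exact ⟨Ctx.inp b C, P', by simp [Ctx.fill, hP]⟩
  | out b P ih =>
      simp [inCount] at h
      obtain ⟨C, P', hP⟩ := ih h
      exact ⟨Ctx.out b C, P', by simp [Ctx.fill, hP]⟩
  | par P Q ihP ihQ =>
      simp [inCount] at h
      by_cases hP : 1 ≤ inCount a P
      · obtain ⟨C, P', hp⟩ := ihP hP
        exact ⟨Ctx.parR C Q, P', by simp [Ctx.fill, hp]⟩
      · obtain ⟨C, P', hp⟩ := ihQ (by omega)
        exact ⟨Ctx.parL P C, P', by simp [Ctx.fill, hp]⟩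

lemma exists_ctx_out {a : ℕ} {P : Proc} (h : 1 ≤ outCount a P) :
    ∃ C P', P = Ctx.fill C (out a P') := by
  induction P with
  | nil => simp [outCount] at h
  | out b P ih =>
      simp [outCount] at h
      by_cases hb : b = a
      · subst hb; exact ⟨Ctx.hole, P, rfl⟩
      · simp [hb] at h
        obtain ⟨C, P', hP⟩ := ih h
        exact ⟨Ctx.out b C, P', by simp [Ctx.fill, hP]⟩
  | inp b P ih =>
      simp [outCount] at h
      obtain ⟨C, P', hP⟩ := ih h
      exact ⟨Ctx.inp b C, P', by simp [Ctx.fill, hP]⟩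
  | par P Q ihP ihQ =>
      simp [outCount] at h
      by_cases hP : 1 ≤ outCount a P
      · obtain ⟨C, P', hp⟩ := ihP hP
        exact ⟨Ctx.parR C Q, P', by simp [Ctx.fill, hp]⟩
      · obtain ⟨C, P', hp⟩ := ihQ (by omega)
        exact ⟨Ctx.parL P C, P', by simp [Ctx.fill, hp]⟩

lemma cin_iff {a : ℕ} {P : Proc} : CInPred a P ↔ 1 ≤ inCount a P := by
  constructor
  · rintro ⟨C, R, hEq, hIn⟩
    have h1 := (streq_counts hEq a).1
    have h2 := inCount_fill_le a C R
    have h3 := topIn_le_inCount a R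
    have h4 := topIn_pos_iff.mpr hIn
    omega
  · intro h
    obtain ⟨C, P', hp⟩ := exists_ctx_inp h
    exact ⟨C, inp a P', by rw [hp]; exact StrEq.refl _, inPred_self a P'⟩

lemma cout_iff {a : ℕ} {P : Proc} : COutPred a P ↔ 1 ≤ outCount a P := by
  constructor
  · rintro ⟨C, R, hEq, hOut⟩
    have h1 := (streq_counts hEq a).2.1
    have h2 := outCount_fill_le a C R
    have h3 := topOut_le_outCount a R
    have h4 := topOut_pos_iff.mpr hOut
    omega
  · intro h
    obtain ⟨C, P', hp⟩ := exists_ctx_out h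
    exact ⟨C, out a P', by rw [hp]; exact StrEq.refl _, outPred_self a P'⟩

lemma red_counts {P Q : Proc} (h : Red P Q) (a : ℕ) :
    inCount a Q + outCount a P = outCount a Q + inCount a P ∧ inCount a Q ≤ inCount a P := by
  induction h with
  | comm b P Q =>
      simp [inCount, outCount]
      rcases eq_or_ne b a with hb | hb <;> simp [hb] <;> omega
  | parL Q _ ih => simp only [inCount, outCount]; omega
  | parR P _ ih => simp only [inCount, outCount]; omega
  | str h1 _ h2 ih =>
      obtain ⟨a1, a2, -, -⟩ := streq_counts h1 a
      obtain ⟨b1, b2, -, -⟩ := streq_counts h2 a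
      omega

lemma inv_reds {P Q : Proc} (h : Reds P Q)
    (h0 : ∀ a, inCount a P = outCount a P ∧ inCount a P ≤ 1) :
    ∀ a, inCount a Q = outCount a Q ∧ inCount a Q ≤ 1 := by
  induction h with
  | refl => exact h0
  | tail _ hstep ih =>
      intro a
      have h1 := red_counts hstep a
      have h2 := ih a
      omega

lemma nil_or_top (Q : Proc) : StrEq Q nil ∨ ∃ a, 1 ≤ topIn a Q ∨ 1 ≤ topOut a Q := by
  induction Q with
  | nil => exact Or.inl (StrEq.refl nil)
  | inp a P ih => exact Or.inr ⟨a, Or.inl (by simp [topIn])⟩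
  | out a P ih => exact Or.inr ⟨a, Or.inr (by simp [topOut])⟩
  | par P Q ihP ihQ =>
      rcases ihP with hP | ⟨a, hP⟩
      · rcases ihQ with hQ | ⟨a, hQ⟩
        · exact Or.inl ((StrEq.congPar hP hQ).trans (StrEq.nilPar nil))
        · refine Or.inr ⟨a, ?_⟩
          simp [topIn, topOut] at hQ ⊢
          omega
      · refine Or.inr ⟨a, ?_⟩
        simp [topIn, topOut] at hP ⊢
        omega

theorem normal_form_wait {P Q : Proc} (hlin : Linear P) (hc : Complete P)
    (h : Reds P Q) (hnf : ¬ ∃ R, Red Q R) (hne : ¬ StrEq Q Proc.nil) :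
    (∃ a, WaitPred a Q) ∧ TopComplete Q := by
  have h0 : ∀ a, inCount a P = outCount a P ∧ inCount a P ≤ 1 := by
    intro a
    have h1 := (hlin a).1
    have h2 := (hlin a).2
    have h3 := hc a
    rw [cin_iff, cout_iff] at h3
    omega
  have hInv := inv_reds h h0
  have hnosync : ∀ a, ¬ (1 ≤ topIn a Q ∧ 1 ≤ topOut a Q) := by
    rintro a ⟨hi, ho⟩
    exact hnf (sync_red hi ho)
  constructor
  · rcases nil_or_top Q with hQ | ⟨a, hQ⟩
    · exact absurd hQ hne
    · refine ⟨a, ?_⟩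
      rcases hQ with hi | ho
      · exact Or.inl ⟨topIn_pos_iff.mp hi, fun hout =>
          hnosync a ⟨hi, topOut_pos_iff.mpr hout⟩⟩
      · exact Or.inr ⟨topOut_pos_iff.mp ho, fun hin =>
          hnosync a ⟨topIn_pos_iff.mpr hin, ho⟩⟩
  · intro a
    have hI := hInv a
    constructor
    · intro hin
      have h1 := topIn_pos_iff.mpr hin
      have h2 := topIn_le_inCount a Q
      rw [cout_iff]
      omega
    · intro hout
      have h1 := topOut_pos_iff.mpr hout
      have h2 := topOut_le_outCount a Q
      rw [cin_iff]
      omega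
end

section
/- PSL ⊆ CMP \ LF: if P is complete and there exist an evaluation context E and process Q with P →* E[Q], Q deadlocked (no reduction, Q ≢ 0) and Q top-complete, then P is not lock-free: there exist a reduct Q₀ of P and a name a with wait(a,Q₀) such that no further reduct R of Q₀ satisfies sync(a,R). -/
open Proc

/-! ### Auxiliary development -/

/-- Polarity-indexed prefix constructor: `true` is input, `false` is output. -/
def pol : Bool → ℕ → Proc → Proc
  | true => Proc.inp
  | false => Proc.out

/-- Polarity-indexed top-level predicate. -/
def PolPred (p : Bool) (a : ℕ) (R : Proc) : Prop :=
  ∃ R' R'', StrEq R (par R' (pol p a R''))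

lemma polPred_true {a R} : PolPred true a R ↔ InPred a R := Iff.rfl
lemma polPred_false {a R} : PolPred false a R ↔ OutPred a R := Iff.rfl

/-- Count of occurrences of name `a` with polarity `p` that are not guarded by
any prefix flagged by `S`. -/
def pCount (S : ℕ → Bool → Bool) (a : ℕ) (p : Bool) : Proc → ℕ
  | Proc.nil => 0
  | Proc.inp b P => (if b = a ∧ p = true then 1 else 0) +
      (if S b true then 0 else pCount S a p P)
  | Proc.out b P => (if b = a ∧ p = false then 1 else 0) +
      (if S b false then 0 else pCount S a p P)
  | Proc.par P Q => pCount S a p P + pCount S a p Q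

lemma pCount_pol (S a q p b P) :
    pCount S a q (pol p b P) = (if b = a ∧ q = p then 1 else 0) +
      (if S b p then 0 else pCount S a q P) := by
  cases p <;> cases q <;> simp [pol, pCount]

lemma streq_pCount {R R'} (h : StrEq R R') (S a p) :
    pCount S a p R = pCount S a p R' := by
  induction h with
  | refl => rfl
  | symm _ ih => exact ih.symm
  | trans _ _ ih1 ih2 => exact ih1.trans ih2
  | nilPar P => simp [pCount]
  | comm P Q => simp [pCount]; omega
  | assoc P Q R => simp [pCount]; omega
  | congPar _ _ ih1 ih2 => simp [pCount, ih1, ih2]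
  | congInp b _ ih => simp [pCount, ih]
  | congOut b _ ih => simp [pCount, ih]

lemma pCount_mono {S T : ℕ → Bool → Bool} (h : ∀ c r, S c r = true → T c r = true)
    (a p) : ∀ R, pCount T a p R ≤ pCount S a p R := by
  intro R
  induction R with
  | nil => simp [pCount]
  | inp b P ih =>
    simp only [pCount]
    cases hS : S b true with
    | true => simp [h b true hS]
    | false =>
      cases hT : T b true <;> simp <;> omega
  | out b P ih =>
    simp only [pCount]
    cases hS : S b false with
    | true => simp [h b false hS]
    | false =>
      cases hT : T b false <;> simp <;> omega
  | par P Q ih1 ih2 => simp only [pCount]; omega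

lemma pCount_bot_true (a R) : pCount (fun _ _ => false) a true R = inCount a R := by
  induction R <;> simp [pCount, inCount, *]

lemma pCount_bot_false (a R) : pCount (fun _ _ => false) a false R = outCount a R := by
  induction R <;> simp [pCount, outCount, *]

lemma streq_par_nil_left (X : Proc) : StrEq (par nil X) X :=
  StrEq.trans (StrEq.comm nil X) (StrEq.nilPar X)

lemma pos_polPred {a p R} (h : 1 ≤ pCount (fun _ _ => true) a p R) : PolPred p a R := by
  induction R with
  | nil => simp [pCount] at h
  | inp b P ih =>
    simp only [pCount, if_pos rfl] at h
    by_cases hb : b = a ∧ p = true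
    · obtain ⟨rfl, rfl⟩ := hb
      exact ⟨nil, P, (streq_par_nil_left _).symm⟩
    · simp [hb] at h
  | out b P ih =>
    simp only [pCount, if_pos rfl] at h
    by_cases hb : b = a ∧ p = false
    · obtain ⟨rfl, rfl⟩ := hb
      exact ⟨nil, P, (streq_par_nil_left _).symm⟩
    · simp [hb] at h
  | par A B ih1 ih2 =>
    simp only [pCount] at h
    rcases Nat.lt_or_ge (pCount (fun _ _ => true) a p A) 1 with hA | hA
    · have hB : 1 ≤ pCount (fun _ _ => true) a p B := by omega
      obtain ⟨B', B'', hB''⟩ := ih2 hB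
      exact ⟨par A B', B'', StrEq.trans (StrEq.congPar (StrEq.refl A) hB'')
        (StrEq.assoc A B' _)⟩
    · obtain ⟨A', A'', hA''⟩ := ih1 hA
      refine ⟨par A' B, A'', ?_⟩
      have h1 : StrEq (par A B) (par (par A' (pol p a A'')) B) :=
        StrEq.congPar hA'' (StrEq.refl B)
      have h2 : StrEq (par (par A' (pol p a A'')) B) (par B (par A' (pol p a A''))) :=
        StrEq.comm _ _
      have h3 : StrEq (par B (par A' (pol p a A''))) (par (par B A') (pol p a A'')) :=
        StrEq.assoc _ _ _
      have h4 : StrEq (par (par B A') (pol p a A'')) (par (par A' B) (pol p a A'')) :=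
        StrEq.congPar (StrEq.comm B A') (StrEq.refl _)
      exact h1.trans (h2.trans (h3.trans h4))

lemma polPred_pos {a p R S} (h : PolPred p a R) : 1 ≤ pCount S a p R := by
  obtain ⟨R', R'', hR⟩ := h
  rw [streq_pCount hR S a p]
  have := pCount_pol S a p p a R''
  simp only [pCount] at *
  rw [this]
  simp
  omega

lemma red_key (S : ℕ → Bool → Bool) {R R'} (h : Red R R') :
    ∃ c, 1 ≤ pCount (fun _ _ => true) c true R ∧
      1 ≤ pCount (fun _ _ => true) c false R ∧
      (S c true = false → S c false = false →
        ∀ a p, pCount S a p R' ≤ pCount S a p R) := by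
  induction h with
  | comm c P Q =>
    refine ⟨c, by simp [pCount], by simp [pCount], ?_⟩
    intro h1 h2 a p
    simp [pCount, h1, h2]
    omega
  | parL Q _ ih =>
    obtain ⟨c, h1, h2, h3⟩ := ih
    refine ⟨c, ?_, ?_, ?_⟩
    · simp only [pCount]; omega
    · simp only [pCount]; omega
    · intro hc1 hc2 a p
      have := h3 hc1 hc2 a p
      simp only [pCount]; omega
  | parR P _ ih =>
    obtain ⟨c, h1, h2, h3⟩ := ih
    refine ⟨c, ?_, ?_, ?_⟩
    · simp only [pCount]; omega
    · simp only [pCount]; omega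
    · intro hc1 hc2 a p
      have := h3 hc1 hc2 a p
      simp only [pCount]; omega
  | str hPP' _ hQ'Q ih =>
    obtain ⟨c, h1, h2, h3⟩ := ih
    refine ⟨c, ?_, ?_, ?_⟩
    · rw [streq_pCount hPP']; exact h1
    · rw [streq_pCount hPP']; exact h2
    · intro hc1 hc2 a p
      rw [streq_pCount hPP' S a p, ← streq_pCount hQ'Q S a p]
      exact h3 hc1 hc2 a p

lemma red_bot_le {R R'} (h : Red R R') (a p) :
    pCount (fun _ _ => false) a p R' ≤ pCount (fun _ _ => false) a p R := by
  obtain ⟨c, _, _, h3⟩ := red_key (fun _ _ => false) h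
  exact h3 rfl rfl a p

lemma reds_bot_le {R R'} (h : Reds R R') (a p) :
    pCount (fun _ _ => false) a p R' ≤ pCount (fun _ _ => false) a p R := by
  induction h with
  | refl => exact le_rfl
  | tail _ hstep ih => exact le_trans (red_bot_le hstep a p) ih

lemma both_exposed_red {c R} (h1 : 1 ≤ pCount (fun _ _ => true) c true R)
    (h2 : 1 ≤ pCount (fun _ _ => true) c false R) : ∃ R', Red R R' := by
  obtain ⟨A, B, hAB⟩ := pos_polPred h1
  have h2' : 1 ≤ pCount (fun _ _ => true) c false A := by
    rw [streq_pCount hAB (fun _ _ => true) c false] at h2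
    simpa [pCount, pol] using h2
  obtain ⟨A', B', hA'⟩ := pos_polPred h2'
  refine ⟨par A' (par B B'), ?_⟩
  have e1 : StrEq R (par (par A' (Proc.out c B')) (Proc.inp c B)) :=
    hAB.trans (StrEq.congPar hA' (StrEq.refl _))
  have e2 : StrEq (par (par A' (Proc.out c B')) (Proc.inp c B))
      (par (Proc.inp c B) (par A' (Proc.out c B'))) := StrEq.comm _ _
  have e3 : StrEq (par (Proc.inp c B) (par A' (Proc.out c B')))
      (par (par (Proc.inp c B) A') (Proc.out c B')) := StrEq.assoc _ _ _
  have e4 : StrEq (par (par (Proc.inp c B) A') (Proc.out c B'))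
      (par (par A' (Proc.inp c B)) (Proc.out c B')) :=
    StrEq.congPar (StrEq.comm _ _) (StrEq.refl _)
  have e5 : StrEq (par (par A' (Proc.inp c B)) (Proc.out c B'))
      (par A' (par (Proc.inp c B) (Proc.out c B'))) := (StrEq.assoc _ _ _).symm
  exact Red.str (e1.trans (e2.trans (e3.trans (e4.trans e5))))
    (Red.parR A' (Red.comm c B B')) (StrEq.refl _)

lemma no_exposed_nil {R} (h : ∀ c p, pCount (fun _ _ => true) c p R = 0) :
    StrEq R nil := by
  induction R with
  | nil => exact StrEq.refl nil
  | inp b P ih => have := h b true; simp [pCount] at this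
  | out b P ih => have := h b false; simp [pCount] at this
  | par A B ih1 ih2 =>
    have hA : ∀ c p, pCount (fun _ _ => true) c p A = 0 := by
      intro c p; have := h c p; simp only [pCount] at this; omega
    have hB : ∀ c p, pCount (fun _ _ => true) c p B = 0 := by
      intro c p; have := h c p; simp only [pCount] at this; omega
    exact (StrEq.congPar (ih1 hA) (ih2 hB)).trans (StrEq.nilPar nil)

lemma fill_pCount (E : ECtx) (S a p R) :
    pCount S a p (E.fill R) = pCount S a p (E.fill nil) + pCount S a p R := by
  induction E with
  | hole => simp [ECtx.fill, pCount]
  | parL P E ih => simp only [ECtx.fill, pCount]; omega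
  | parR E P ih => simp only [ECtx.fill, pCount]; omega

lemma ctx_pCount_bot (C : Ctx) (a p R) :
    pCount (fun _ _ => false) a p R ≤ pCount (fun _ _ => false) a p (C.fill R) := by
  induction C with
  | hole => simp [Ctx.fill]
  | parL P C ih => simp only [Ctx.fill, pCount]; omega
  | parR C P ih => simp only [Ctx.fill, pCount]; omega
  | inp b C ih => simp only [Ctx.fill, pCount, Bool.false_eq_true, if_false]; omega
  | out b C ih => simp only [Ctx.fill, pCount, Bool.false_eq_true, if_false]; omega

lemma saturation {S : ℕ → Bool → Bool} {Q : Proc}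
    (hS : ∀ c r, 1 ≤ pCount (fun _ _ => true) c r Q → S c r = true) (a p) :
    pCount S a p Q = pCount (fun _ _ => true) a p Q := by
  induction Q with
  | nil => rfl
  | inp b P ih =>
    have hb : S b true = true := hS b true (by simp [pCount])
    simp [pCount, hb]
  | out b P ih =>
    have hb : S b false = true := hS b false (by simp [pCount])
    simp [pCount, hb]
  | par A B ih1 ih2 =>
    have hA : ∀ c r, 1 ≤ pCount (fun _ _ => true) c r A → S c r = true := by
      intro c r h; refine hS c r ?_; simp only [pCount]; omega
    have hB : ∀ c r, 1 ≤ pCount (fun _ _ => true) c r B → S c r = true := by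
      intro c r h; refine hS c r ?_; simp only [pCount]; omega
    simp only [pCount, ih1 hA, ih2 hB]

lemma red_inv {S : ℕ → Bool → Bool} {R R'} (h : Red R R')
    (hI : ∀ b q, S b q = true → pCount S b (!q) R = 0) :
    ∀ b q, S b q = true → pCount S b (!q) R' = 0 := by
  obtain ⟨c, h1, h2, h3⟩ := red_key S h
  have hle1 : pCount (fun _ _ => true) c true R ≤ pCount S c true R :=
    pCount_mono (fun _ _ _ => rfl) c true R
  have hle2 : pCount (fun _ _ => true) c false R ≤ pCount S c false R :=
    pCount_mono (fun _ _ _ => rfl) c false R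
  have hc1 : S c true = false := by
    cases hc : S c true with
    | false => rfl
    | true => have := hI c true hc; simp only [Bool.not_true] at this; omega
  have hc2 : S c false = false := by
    cases hc : S c false with
    | false => rfl
    | true => have := hI c false hc; simp only [Bool.not_false] at this; omega
  intro b q hb
  have := h3 hc1 hc2 b (!q)
  have := hI b q hb
  omega

lemma reds_inv {S : ℕ → Bool → Bool} {R R'} (h : Reds R R')
    (hI : ∀ b q, S b q = true → pCount S b (!q) R = 0) :
    ∀ b q, S b q = true → pCount S b (!q) R' = 0 := by
  induction h with
  | refl => exact hI
  | tail _ hstep ih => exact red_inv hstep ih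

/-- PSL ⊆ CMP \ LF. -/
theorem psl_not_lf {P : Proc} (hlin : Linear P) (hc : Complete P)
    (hpsl : ∃ (E : ECtx) (Q : Proc), Reds P (E.fill Q) ∧ Deadlock Q ∧ TopComplete Q) :
    ∃ (Q₀ : Proc) (a : ℕ), Reds P Q₀ ∧ WaitPred a Q₀ ∧
      ∀ R, Reds Q₀ R → ¬ SyncPred a R := by
  classical
  obtain ⟨E, Q, hredPQ, hdl, htc⟩ := hpsl
  set S : ℕ → Bool → Bool :=
    fun c r => decide (1 ≤ pCount (fun _ _ => true) c r Q) with hSdef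
  have hSiff : ∀ c r, S c r = true ↔ 1 ≤ pCount (fun _ _ => true) c r Q := by
    intro c r; simp [hSdef]
  have hsat : ∀ a p, pCount S a p Q = pCount (fun _ _ => true) a p Q :=
    saturation (fun c r h => (hSiff c r).mpr h)
  have hmonoS : ∀ a p R, pCount (fun _ _ => true) a p R ≤ pCount S a p R :=
    fun a p R => pCount_mono (fun _ _ _ => rfl) a p R
  have hmonoB : ∀ a p R, pCount S a p R ≤ pCount (fun _ _ => false) a p R :=
    fun a p R => pCount_mono (fun c r hc => by simp at hc) a p R
  have hlin0 : ∀ a p, pCount (fun _ _ => false) a p (E.fill Q) ≤ 1 := by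
    intro a p
    refine le_trans (reds_bot_le hredPQ a p) ?_
    cases p
    · rw [pCount_bot_false]; exact (hlin a).2
    · rw [pCount_bot_true]; exact (hlin a).1
  have hInv0 : ∀ b q, S b q = true → pCount S b (!q) (E.fill Q) = 0 := by
    intro b q hb
    have hbQ : 1 ≤ pCount (fun _ _ => true) b q Q := (hSiff b q).mp hb
    have hQ0 : pCount S b (!q) Q = 0 := by
      rw [hsat]
      by_contra h
      have h1 : 1 ≤ pCount (fun _ _ => true) b (!q) Q := Nat.one_le_iff_ne_zero.mpr h
      refine hdl.1 ?_
      cases q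
      · exact both_exposed_red h1 hbQ
      · exact both_exposed_red hbQ h1
    have hocc : 1 ≤ pCount (fun _ _ => false) b (!q) Q := by
      have hpol : PolPred q b Q := pos_polPred hbQ
      cases q
      · obtain ⟨C, Q1, hQ1, hin⟩ := (htc b).2 hpol
        have h1 : 1 ≤ pCount (fun _ _ => false) b true Q1 := polPred_pos hin
        rw [streq_pCount hQ1]
        exact le_trans h1 (ctx_pCount_bot C b true Q1)
      · obtain ⟨C, Q1, hQ1, hout⟩ := (htc b).1 hpol
        have h1 : 1 ≤ pCount (fun _ _ => false) b false Q1 := polPred_pos hout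
        rw [streq_pCount hQ1]
        exact le_trans h1 (ctx_pCount_bot C b false Q1)
    have htot := hlin0 b (!q)
    rw [fill_pCount] at htot
    have hEnil : pCount S b (!q) (E.fill nil) ≤
        pCount (fun _ _ => false) b (!q) (E.fill nil) := hmonoB _ _ _
    rw [fill_pCount]
    omega
  have hex : ∃ c p, S c p = true := by
    by_contra h
    push_neg at h
    refine hdl.2 (no_exposed_nil ?_)
    intro c p
    have h1 := h c p
    have h2 : ¬ 1 ≤ pCount (fun _ _ => true) c p Q :=
      fun h' => h1 ((hSiff c p).mpr h')
    omega
  obtain ⟨a, p, hap⟩ := hex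
  refine ⟨E.fill Q, a, hredPQ, ?_, ?_⟩
  · have hPolQ0 : PolPred p a (E.fill Q) := by
      apply pos_polPred
      have h1 := (hSiff a p).mp hap
      rw [fill_pCount]
      omega
    have hnot : ¬ PolPred (!p) a (E.fill Q) := by
      intro h
      have h1 : 1 ≤ pCount S a (!p) (E.fill Q) := polPred_pos h
      have h2 := hInv0 a p hap
      omega
    unfold WaitPred Xor'
    cases p
    · exact Or.inr ⟨hPolQ0, by simpa [polPred_true] using hnot⟩
    · exact Or.inl ⟨hPolQ0, by simpa [polPred_false] using hnot⟩
  · intro R hR hsync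
    have hIR := reds_inv hR hInv0 a p hap
    have hpolR : PolPred (!p) a R := by
      cases p
      · exact hsync.1
      · exact hsync.2
    have h1 : 1 ≤ pCount S a (!p) R := polPred_pos hpolR
    omega
end

section
/- If a deadlocked process Q (no reduction, Q ≢ 0) exists, then there is a name a with wait(a,Q): Q offers a top-level action on a but not its co-action. -/
open Proc

/-- Top-level actions (polarity, name) of a process. -/
def tops : Proc → Multiset (Bool × ℕ)
  | nil => 0
  | inp a _ => {(true, a)}
  | out a _ => {(false, a)}
  | par P Q => tops P + tops Q

lemma tops_eq {P Q : Proc} (h : StrEq P Q) : tops P = tops Q := by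
  induction h with
  | refl => rfl
  | symm _ ih => exact ih.symm
  | trans _ _ ih1 ih2 => exact ih1.trans ih2
  | nilPar P => simp [tops]
  | comm P Q => simp [tops, add_comm]
  | assoc P Q R => simp [tops, add_assoc]
  | congPar _ _ ih1 ih2 => simp [tops, ih1, ih2]
  | congInp a _ => rfl
  | congOut a _ => rfl

lemma streq_nil {Q : Proc} (h : tops Q = 0) : StrEq Q nil := by
  induction Q with
  | nil => exact .refl _
  | inp a P ih => simp [tops] at h
  | out a P ih => simp [tops] at h
  | par P R ihP ihR =>
    simp [tops] at h
    exact .trans (.congPar (ihP h.1) (ihR h.2)) (.nilPar nil)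

lemma mem_tops {Q : Proc} {b : Bool} {a : ℕ} (h : (b, a) ∈ tops Q) :
    if b then InPred a Q else OutPred a Q := by
  induction Q with
  | nil => simp [tops] at h
  | inp c P ih =>
    simp [tops, Prod.ext_iff] at h
    obtain ⟨hb, hc⟩ := h
    subst hb; subst hc
    exact ⟨nil, P, .symm (.trans (.comm _ _) (.nilPar _))⟩
  | out c P ih =>
    simp [tops, Prod.ext_iff] at h
    obtain ⟨hb, hc⟩ := h
    subst hb; subst hc
    exact ⟨nil, P, .symm (.trans (.comm _ _) (.nilPar _))⟩
  | par P R ihP ihR =>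
    simp [tops] at h
    cases b <;> simp only [if_true, if_false, Bool.false_eq_true] at *
    · rcases h with h | h
      · obtain ⟨P', P'', hP⟩ := ihP h
        exact ⟨par P' R, P'', .trans (.congPar hP (.refl R))
          (.trans (.symm (.assoc _ _ _))
            (.trans (.congPar (.refl P') (.comm _ _)) (.assoc _ _ _)))⟩
      · obtain ⟨P', P'', hR⟩ := ihR h
        exact ⟨par P P', P'', .trans (.congPar (.refl P) hR) (.assoc _ _ _)⟩
    · rcases h with h | h
      · obtain ⟨P', P'', hP⟩ := ihP h
        exact ⟨par P' R, P'', .trans (.congPar hP (.refl R))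
          (.trans (.symm (.assoc _ _ _))
            (.trans (.congPar (.refl P') (.comm _ _)) (.assoc _ _ _)))⟩
      · obtain ⟨P', P'', hR⟩ := ihR h
        exact ⟨par P P', P'', .trans (.congPar (.refl P) hR) (.assoc _ _ _)⟩

lemma sync_red_s11 {Q : Proc} {a : ℕ} (hin : InPred a Q) (hout : OutPred a Q) :
    ∃ Q', Red Q Q' := by
  obtain ⟨P', P'', hP⟩ := hin
  obtain ⟨R', R'', hR⟩ := hout
  have hmem : (false, a) ∈ tops P' := by
    have h1 := tops_eq hP
    have h2 := tops_eq hR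
    have : (false, a) ∈ tops Q := by
      rw [h2]; simp [tops]
    rw [h1] at this
    simp [tops] at this
    exact this
  have hout' : OutPred a P' := by simpa using mem_tops hmem
  obtain ⟨S, S'', hS⟩ := hout'
  refine ⟨par S (par P'' S''), .str ?_ (.parR S (.comm a P'' S'')) (.refl _)⟩
  exact .trans hP (.trans (.congPar hS (.refl _))
    (.trans (.symm (.assoc _ _ _)) (.congPar (.refl S) (.comm _ _))))

theorem deadlock_wait {Q : Proc} (h : Deadlock Q) : ∃ a, WaitPred a Q := by
  obtain ⟨hnored, hnnil⟩ := h
  have htops : tops Q ≠ 0 := fun h0 => hnnil (streq_nil h0)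
  obtain ⟨⟨b, a⟩, hmem⟩ := Multiset.exists_mem_of_ne_zero htops
  refine ⟨a, ?_⟩
  have := mem_tops hmem
  cases b <;> simp at this
  · exact Or.inr ⟨this, fun hin => hnored (sync_red_s11 hin this)⟩
  · exact Or.inl ⟨this, fun hout => hnored (sync_red_s11 this hout)⟩
end
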